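/- arXiv:2410.02588 — 3 statements merged into one kernel-verified Lean document; each statement's English description precedes it below -/
import Mathlib

section
/- Let g : S → ℂ be holomorphic, mapping S bijectively onto the open unit disc D = {z ∈ ℂ : |z| < 1}, with g(0) = 0 and with g'(0) a positive real number. Then for all z ∈ S one has conj(g(z)) = g(conj(z)) and −conj(g(z)) = g(−conj(z)); in particular g(−z) = −g(z) for all z ∈ S. -/
open Complex Set Metric Function
open scoped Real ComplexConjugate

/-!
The map `z ↦ (exp (π z / 2) - 1) / (exp (π z / 2) + 1)` sends the strip biholomorphically onto
the disc, fixes `0`, has positive derivative there, commutes with `conj` and is odd. Any other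
such `g` agrees with it: composing `g` with the inverse map gives a holomorphic bijection `G` of
the disc with `G 0 = 0` and `G' 0 > 0`. Schwarz's lemma gives `‖G' 0‖ ≤ 1`; conversely, since
`G` is a homeomorphism of the disc, `‖G u‖ → 1` as `‖u‖ → 1`, and the maximum principle for
`u / G u` gives `‖G' 0‖ ≥ 1`. Hence `G' 0 = 1` and `G = id` by the equality case of Schwarz.
-/

section DiscAutomorphism

variable {G : ℂ → ℂ}

theorem continuousOn_invFunOn_of_bijOn {U V : Set ℂ} (hU : IsOpen U) (hUc : IsPreconnected U)
    (hUn : U.Nontrivial) (hd : DifferentiableOn ℂ G U) (hb : BijOn G U V) :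
    ContinuousOn (invFunOn G U) V := by
  obtain ⟨w, hw⟩ | himage := (hd.analyticOnNhd hU).is_constant_or_isOpen hUc
  · obtain ⟨x, hx, y, hy, hxy⟩ := hUn
    exact absurd (hb.injOn hx hy (by rw [hw x hx, hw y hy])) hxy
  have hopen : IsOpenMap (U.domRestrict G) := fun s hs => by
    rw [domRestrict_eq, image_comp]
    exact himage _ (Subtype.coe_image_subset _ _) (hU.isOpenMap_subtype_val s hs)
  simpa only [hb.image_eq] using hopen.continuousOn_image_of_leftInvOn hb.invOn_invFunOn.1

theorem exists_lt_norm_of_bijOn_ball (hd : DifferentiableOn ℂ G (ball 0 1))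
    (hb : BijOn G (ball 0 1) (ball 0 1)) {c : ℝ} (hc : c < 1) :
    ∃ ρ < 1, ∀ u ∈ ball (0 : ℂ) 1, ρ ≤ ‖u‖ → c < ‖G u‖ := by
  set K := invFunOn G (ball 0 1) '' closedBall 0 c
  have hcK : closedBall (0 : ℂ) c ⊆ ball 0 1 := closedBall_subset_ball hc
  have hK : IsCompact K := (isCompact_closedBall 0 c).image_of_continuousOn
    ((continuousOn_invFunOn_of_bijOn isOpen_ball (convex_ball 0 1).isPreconnected
      ⟨0, mem_ball_self one_pos, 1 / 2, by norm_num, by norm_num⟩ hd hb).mono hcK)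
  obtain ⟨ρ, hρ, hKρ⟩ := exists_lt_subset_ball hK.isClosed
    ((hb.surjOn.mapsTo_invFunOn.mono_left hcK).image_subset)
  refine ⟨ρ, hρ, fun u hu hρu => ?_⟩
  by_contra! hGu
  have : u ∈ K := ⟨G u, mem_closedBall_zero_iff.mpr hGu, hb.invOn_invFunOn.1 hu⟩
  exact (mem_ball_zero_iff.mp (hKρ this)).not_ge hρu

theorem one_le_norm_deriv_of_bijOn_ball (hd : DifferentiableOn ℂ G (ball 0 1))
    (hb : BijOn G (ball 0 1) (ball 0 1)) (h0 : G 0 = 0) (hG' : deriv G 0 ≠ 0) :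
    1 ≤ ‖deriv G 0‖ := by
  have hslope : ∀ z ∈ ball (0 : ℂ) 1, dslope G 0 z ≠ 0 := by
    intro z hz
    rcases eq_or_ne z 0 with rfl | hz0
    · rwa [dslope_same]
    · rw [dslope_of_ne _ hz0, slope_def_field, h0, sub_zero, sub_zero]
      exact div_ne_zero (fun h => hz0 (hb.injOn hz (mem_ball_self one_pos) (h.trans h0.symm))) hz0
  have hψ : DifferentiableOn ℂ (fun z => (dslope G 0 z)⁻¹) (ball 0 1) :=
    ((differentiableOn_dslope (isOpen_ball.mem_nhds (mem_ball_self one_pos))).mpr hd).inv hslope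
  suffices h : ‖(deriv G 0)⁻¹‖ ≤ 1 by
    rwa [norm_inv, inv_le_one₀ (norm_pos_iff.mpr hG')] at h
  refine (le_iff_forall_one_lt_le_mul₀ zero_le_one).mpr fun ε hε => ?_
  obtain ⟨ρ, hρ1, hρ⟩ := exists_lt_norm_of_bijOn_ball hd hb (inv_lt_one_of_one_lt₀ hε)
  set t := max ρ (1 / 2)
  have ht0 : 0 < t := lt_max_of_lt_right one_half_pos
  have ht1 : t < 1 := max_lt hρ1 one_half_lt_one
  rw [one_mul, ← dslope_same]
  -- maximum modulus on the circle `‖u‖ = t`, where `‖(dslope G 0 u)⁻¹‖ = t / ‖G u‖ < ε`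
  refine norm_le_of_forall_mem_frontier_norm_le (f := fun z => (dslope G 0 z)⁻¹) isBounded_ball
    (DifferentiableOn.diffContOnCl ?_) (fun u hu => ?_) (subset_closure (mem_ball_self ht0))
  · rw [closure_ball 0 ht0.ne']
    exact hψ.mono (closedBall_subset_ball ht1)
  rw [frontier_ball 0 ht0.ne', mem_sphere_zero_iff_norm] at hu
  have hu1 : u ∈ ball (0 : ℂ) 1 := mem_ball_zero_iff.mpr (hu.trans_lt ht1)
  have hu0 : u ≠ 0 := norm_pos_iff.mp (hu ▸ ht0)
  have hGu : ε⁻¹ < ‖G u‖ := hρ u hu1 (hu.symm ▸ le_max_left ρ _)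
  rw [dslope_of_ne _ hu0, slope_def_field, h0, sub_zero, sub_zero, norm_inv, norm_div, hu,
    inv_div]
  have hGu0 : 0 < ‖G u‖ := (inv_pos.mpr (zero_lt_one.trans hε)).trans hGu
  calc t / ‖G u‖ ≤ 1 / ‖G u‖ := by gcongr
    _ ≤ ε := by rw [one_div, inv_le_comm₀ hGu0 (zero_lt_one.trans hε)]; exact hGu.le

theorem eqOn_id_of_bijOn_ball (hd : DifferentiableOn ℂ G (ball 0 1))
    (hb : BijOn G (ball 0 1) (ball 0 1)) (h0 : G 0 = 0) {r : ℝ} (hr : 0 < r)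
    (hG' : deriv G 0 = r) : EqOn G id (ball 0 1) := by
  have hmaps : MapsTo G (ball 0 1) (closedBall (G 0) 1) := by
    rw [h0]; exact hb.mapsTo.mono_right ball_subset_closedBall
  have hnorm : ‖deriv G 0‖ = r := by rw [hG', norm_real, Real.norm_of_nonneg hr.le]
  have hG'1 : deriv G 0 = 1 := by
    refine hG'.trans (congrArg _ (le_antisymm ?_ ?_))
    · exact hnorm ▸ norm_deriv_le_one_of_mapsTo_ball hd hmaps one_pos
    · exact hnorm ▸ one_le_norm_deriv_of_bijOn_ball hd hb h0 (hG' ▸ ofReal_ne_zero.mpr hr.ne')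
  have hG_affine := affine_of_mapsTo_ball_of_norm_dslope_eq_div hd hmaps (mem_ball_self one_pos)
    (by rw [dslope_same, hG'1, norm_one, div_one])
  intro z hz
  simpa [h0, dslope_same, hG'1] using hG_affine hz

end DiscAutomorphism

theorem re_exp_pos_of_abs_im_lt {z : ℂ} (hz : |z.im| < π / 2) : 0 < (exp z).re := by
  rw [exp_re]
  exact mul_pos (Real.exp_pos _) (Real.cos_pos_of_mem_Ioo (abs_lt.mp hz))

theorem norm_sub_one_div_add_one_lt_one {w : ℂ} (hw : 0 < w.re) : ‖(w - 1) / (w + 1)‖ < 1 := by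
  have hw1 : w + 1 ≠ 0 := ne_of_apply_ne re (by simp; linarith)
  rw [norm_div, div_lt_one (norm_pos_iff.mpr hw1), ← sq_lt_sq₀ (norm_nonneg _) (norm_nonneg _),
    Complex.sq_norm, Complex.sq_norm, normSq_apply, normSq_apply]
  simp only [sub_re, sub_im, add_re, add_im, one_re, one_im]
  nlinarith

theorem re_one_add_div_one_sub_pos {w : ℂ} (hw : ‖w‖ < 1) : 0 < ((1 + w) / (1 - w)).re := by
  have hw1 : 1 - w ≠ 0 := fun h => by simp [← sub_eq_zero.mp h] at hw
  have hnormSq : w.re * w.re + w.im * w.im < 1 := by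
    rw [← normSq_apply, normSq_eq_norm_sq]
    nlinarith [norm_nonneg w]
  rw [div_re, ← add_div]
  refine div_pos ?_ (normSq_pos.mpr hw1)
  simp only [add_re, add_im, sub_re, sub_im, one_re, one_im]
  nlinarith

def strip : Set ℂ := {z : ℂ | |z.im| < 1}

theorem isOpen_strip : IsOpen strip :=
  isOpen_lt (continuous_abs.comp continuous_im) continuous_const

theorem zero_mem_strip : (0 : ℂ) ∈ strip := by simp [strip]

theorem conj_mem_strip {z : ℂ} (hz : z ∈ strip) : conj z ∈ strip := by simpa [strip] using hz

theorem neg_mem_strip {z : ℂ} (hz : z ∈ strip) : -z ∈ strip := by simpa [strip] using hz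

theorem abs_im_pi_div_two_mul_lt {z : ℂ} (hz : z ∈ strip) : |(π / 2 * z).im| < π / 2 := by
  have him : (π / 2 * z).im = π / 2 * z.im := by simp
  rw [him, abs_mul, abs_of_pos Real.pi_div_two_pos]
  exact mul_lt_of_lt_one_right Real.pi_div_two_pos hz

noncomputable def stripToDisc (z : ℂ) : ℂ := (exp (π / 2 * z) - 1) / (exp (π / 2 * z) + 1)

noncomputable def discToStrip (w : ℂ) : ℂ := 2 / π * log ((1 + w) / (1 - w))

theorem stripToDisc_mem_ball {z : ℂ} (hz : z ∈ strip) : stripToDisc z ∈ ball 0 1 :=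
  mem_ball_zero_iff.mpr
    (norm_sub_one_div_add_one_lt_one (re_exp_pos_of_abs_im_lt (abs_im_pi_div_two_mul_lt hz)))

theorem discToStrip_mem_strip {w : ℂ} (hw : w ∈ ball 0 1) : discToStrip w ∈ strip := by
  have harg := abs_arg_lt_pi_div_two_iff.mpr (Or.inl (re_one_add_div_one_sub_pos
    (mem_ball_zero_iff.mp hw)))
  have him : (discToStrip w).im = 2 / π * arg ((1 + w) / (1 - w)) := by
    simp [discToStrip, log_im]
  change |(discToStrip w).im| < 1
  rw [him, abs_mul, abs_of_pos (by positivity)]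
  calc 2 / π * |arg ((1 + w) / (1 - w))| < 2 / π * (π / 2) := by gcongr
    _ = 1 := by field_simp

theorem discToStrip_stripToDisc {z : ℂ} (hz : z ∈ strip) : discToStrip (stripToDisc z) = z := by
  have hmob : (1 + stripToDisc z) / (1 - stripToDisc z) = exp (π / 2 * z) := by
    have hre := re_exp_pos_of_abs_im_lt (abs_im_pi_div_two_mul_lt hz)
    have ht1 : exp (π / 2 * z) + 1 ≠ 0 := ne_of_apply_ne re (by simp; linarith)
    rw [stripToDisc, one_add_div ht1, one_sub_div ht1, div_div_div_cancel_right₀ ht1,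
      add_add_sub_cancel, add_sub_sub_cancel, ← two_mul, one_add_one_eq_two,
      mul_div_cancel_left₀ _ two_ne_zero]
  obtain ⟨him1, him2⟩ := abs_lt.mp (abs_im_pi_div_two_mul_lt hz)
  rw [discToStrip, hmob, log_exp (by linarith [Real.pi_pos]) (by linarith [Real.pi_pos])]
  field_simp

theorem stripToDisc_discToStrip {w : ℂ} (hw : w ∈ ball 0 1) : stripToDisc (discToStrip w) = w := by
  have hre := re_one_add_div_one_sub_pos (mem_ball_zero_iff.mp hw)
  have hu0 : (1 + w) / (1 - w) ≠ 0 := slitPlane_ne_zero (mem_slitPlane_iff.mpr (Or.inl hre))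
  have hw1 : 1 - w ≠ 0 := fun h => by simp [h] at hre
  have hexp : exp (π / 2 * discToStrip w) = (1 + w) / (1 - w) := by
    rw [discToStrip, ← mul_assoc, div_mul_div_comm, mul_comm (π : ℂ) 2, div_self (by simp),
      one_mul, exp_log hu0]
  rw [stripToDisc, hexp]
  field_simp
  ring

theorem bijOn_discToStrip : BijOn discToStrip (ball 0 1) strip :=
  InvOn.bijOn ⟨fun _ hw => stripToDisc_discToStrip hw, fun _ hz => discToStrip_stripToDisc hz⟩
    (fun _ => discToStrip_mem_strip) (fun _ => stripToDisc_mem_ball)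

theorem differentiableOn_discToStrip : DifferentiableOn ℂ discToStrip (ball 0 1) := by
  intro w hw
  have hre := re_one_add_div_one_sub_pos (mem_ball_zero_iff.mp hw)
  have hw1 : 1 - w ≠ 0 := fun h => by simp [h] at hre
  refine (DifferentiableAt.const_mul ?_ _).differentiableWithinAt
  exact (differentiableAt_log (mem_slitPlane_iff.mpr (Or.inl hre))).comp w
    ((differentiableAt_id.const_add 1).div (differentiableAt_id.const_sub 1) hw1)

theorem discToStrip_zero : discToStrip 0 = 0 := by simp [discToStrip]

theorem hasDerivAt_discToStrip_zero : HasDerivAt discToStrip (4 / π) 0 := by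
  have hmob : HasDerivAt (fun w : ℂ => (1 + w) / (1 - w)) 2 0 := by
    refine (((hasDerivAt_id' (0 : ℂ)).const_add 1).div ((hasDerivAt_id' (0 : ℂ)).const_sub 1)
      (by norm_num)).congr_deriv ?_
    norm_num
  have hlog : HasDerivAt log 1 ((1 + 0) / (1 - 0)) := by
    simpa using hasDerivAt_log (z := 1) (by simp)
  exact ((hlog.comp 0 hmob).const_mul (2 / π : ℂ)).congr_deriv (by ring)

theorem stripToDisc_conj (z : ℂ) : stripToDisc (conj z) = conj (stripToDisc z) := by
  simp only [stripToDisc, map_div₀, map_sub, map_add, map_one, ← exp_conj, map_mul,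
    conj_ofReal, map_ofNat]

theorem stripToDisc_neg (z : ℂ) : stripToDisc (-z) = -stripToDisc z := by
  have ht : exp (π / 2 * z) ≠ 0 := exp_ne_zero _
  rw [stripToDisc, stripToDisc, mul_neg, exp_neg, ← neg_div, neg_sub,
    ← mul_div_mul_right _ _ ht]
  field_simp
  ring

theorem eqOn_stripToDisc {g : ℂ → ℂ} (hg : DifferentiableOn ℂ g strip)
    (hbij : BijOn g strip (ball 0 1)) (h0 : g 0 = 0) {r : ℝ} (hr : 0 < r) (hg' : deriv g 0 = r) :
    EqOn g stripToDisc strip := by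
  have hg_at : HasDerivAt g r (discToStrip 0) := by
    rw [discToStrip_zero, ← hg']
    exact (hg.differentiableAt (isOpen_strip.mem_nhds zero_mem_strip)).hasDerivAt
  have hG := eqOn_id_of_bijOn_ball (G := g ∘ discToStrip)
    (hg.comp differentiableOn_discToStrip bijOn_discToStrip.mapsTo)
    (hbij.comp bijOn_discToStrip) (by simp [discToStrip_zero, h0]) (r := r * (4 / π))
    (by positivity) (by rw [(hg_at.comp 0 hasDerivAt_discToStrip_zero).deriv]; push_cast; ring)
  intro z hz
  simpa [discToStrip_stripToDisc hz] using hG (stripToDisc_mem_ball hz)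

/-- the normalized Riemann map `g` of the strip `S = {z : |Im z| < 1}`
onto the unit disc (with `g 0 = 0` and `g'(0) > 0` real) is symmetric with respect
to both the real and imaginary axes; in particular it is odd on `S`. -/
theorem stmt_1 (g : ℂ → ℂ)
    (hg : DifferentiableOn ℂ g {z : ℂ | |z.im| < 1})
    (hbij : Set.BijOn g {z : ℂ | |z.im| < 1} (Metric.ball (0 : ℂ) 1))
    (h0 : g 0 = 0)
    (hpos : ∃ r : ℝ, 0 < r ∧ deriv g 0 = r) :
    ∀ z ∈ {z : ℂ | |z.im| < 1},
      (starRingEnd ℂ) (g z) = g ((starRingEnd ℂ) z) ∧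
      -(starRingEnd ℂ) (g z) = g (-(starRingEnd ℂ) z) ∧
      g (-z) = -g z := by
  obtain ⟨r, hr, hg'⟩ := hpos
  have hgS : EqOn g stripToDisc strip := eqOn_stripToDisc hg hbij h0 hr hg'
  intro z hz
  have hz' : conj z ∈ strip := conj_mem_strip hz
  refine ⟨?_, ?_, ?_⟩
  · rw [hgS hz, hgS hz', stripToDisc_conj]
  · rw [hgS hz, hgS (neg_mem_strip hz'), stripToDisc_neg, stripToDisc_conj]
  · rw [hgS hz, hgS (neg_mem_strip hz), stripToDisc_neg]
end

section
/- Let Ω ⊆ ℂ be a nonempty open simply connected set with Ω ≠ ℂ, and let L > 0 be such that Ω + L = Ω (i.e. z ∈ Ω if and only if z + L ∈ Ω). Let z₀ ∈ Ω and let F : Ω → ℂ be holomorphic, mapping Ω bijectively onto S, with F(z₀) = 0, with M := F(z₀ + L) a positive real number, and with F'(z₀ + L)/F'(z₀) a positive real number. Then F(z + L) = F(z) + M for all z ∈ Ω. -/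
/-!
Put `G := F⁻¹ : S → Ω`; it is holomorphic because an injective holomorphic map has nonvanishing
derivative (near a critical point it is locally `n`-to-one with `n ≥ 2`). Since `Ω + L = Ω` and
`S - M = S`, the map `K w = F (G w + L) - M` is a biholomorphic self-map of the strip with
`K 0 = 0` (because `F z₀ = 0` and `F (z₀ + L) = M`) and `K' 0 = F'(z₀ + L) / F'(z₀) > 0`.
Conjugating by a Riemann map of the strip onto the unit disk sending `0` to `0`, the Schwarz
lemma applied to the conjugate and to its inverse forces `K = id`, i.e. `F (z + L) = F z + M`.
-/

open Complex Set Metric Filter Function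
open scoped Topology ComplexOrder Real

theorem exists_ne_pow_eq_pow_of_hasStrictDerivAt {φ : ℂ → ℂ} {φ' a : ℂ} {n : ℕ}
    (hφ : HasStrictDerivAt φ φ' a) (hφ' : φ' ≠ 0) (ha : φ a = 0) (hn : 2 ≤ n)
    {U : Set ℂ} (hU : U ∈ 𝓝 a) : ∃ z₁ ∈ U, ∃ z₂ ∈ U, z₁ ≠ z₂ ∧ φ z₁ ^ n = φ z₂ ^ n := by
  obtain ⟨ω, hω⟩ : ∃ ω : ℂ, IsPrimitiveRoot ω n := ⟨_, isPrimitiveRoot_exp n (by omega)⟩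
  have hV : ∀ᶠ w in 𝓝 (0 : ℂ), w ∈ φ '' U := by
    rw [← ha, ← hφ.map_nhds_eq hφ']
    exact image_mem_map hU
  have hωV : ∀ᶠ w in 𝓝 (0 : ℂ), ω * w ∈ φ '' U :=
    (continuous_const_mul ω).tendsto' 0 0 (mul_zero ω) hV
  obtain ⟨w, ⟨⟨z₁, hz₁, rfl⟩, z₂, hz₂, hφz₂⟩, hw0⟩ :=
    (((hV.and hωV).filter_mono nhdsWithin_le_nhds).and (self_mem_nhdsWithin (s := {0}ᶜ))).exists
  refine ⟨z₁, hz₁, z₂, hz₂, ?_, ?_⟩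
  · rintro rfl
    refine hω.ne_one (by omega) (mul_right_cancel₀ hw0 ?_)
    rw [one_mul, ← hφz₂]
  · rw [hφz₂, mul_pow, hω.pow_eq_one, one_mul]

theorem AnalyticAt.deriv_ne_zero_of_injOn {f : ℂ → ℂ} {a : ℂ} {U : Set ℂ}
    (hf : AnalyticAt ℂ f a) (hU : U ∈ 𝓝 a) (hinj : InjOn f U) : deriv f a ≠ 0 := by
  intro hd
  have hfa : AnalyticAt ℂ (f · - f a) a := hf.sub analyticAt_const
  have h2 : ((2 : ℕ) : ℕ∞) ≤ analyticOrderAt (f · - f a) a := by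
    rw [natCast_le_analyticOrderAt_iff_iteratedDeriv_eq_zero hfa]
    intro i hi
    interval_cases i <;> simp [hd]
  have htop : analyticOrderAt (f · - f a) a ≠ ⊤ := by
    rw [Ne, analyticOrderAt_eq_top]
    intro h
    obtain ⟨z, ⟨hz, hzU⟩, hza⟩ :=
      (((h.and hU).filter_mono nhdsWithin_le_nhds).and (self_mem_nhdsWithin (s := {a}ᶜ))).exists
    exact hza (hinj hzU (mem_of_mem_nhds hU) (sub_eq_zero.mp hz))
  obtain ⟨n, hn⟩ := ENat.ne_top_iff_exists.mp htop
  obtain ⟨g, hg, hga, hfg⟩ := (analyticOrderAt_eq_natCast hfa).mp hn.symm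
  have hn2 : 2 ≤ n := by rw [← hn] at h2; exact_mod_cast h2
  set ρ : ℂ → ℂ := fun z ↦ (g z / g a) ^ (n⁻¹ : ℂ)
  set φ : ℂ → ℂ := fun z ↦ (z - a) * ρ z
  have hρa : ρ a = 1 := by simp [ρ, hga]
  have hρ : AnalyticAt ℂ ρ a :=
    (hg.div analyticAt_const hga).cpow analyticAt_const (by simp [hga])
  have hφ : HasStrictDerivAt φ 1 a := by
    simpa [hρa] using
      HasStrictDerivAt.fun_mul ((hasStrictDerivAt_id a).sub_const a) hρ.hasStrictDerivAt
  -- `φ` is a local coordinate at `a` in which `f` reads `w ↦ f a + g a * w ^ n`, `n ≥ 2`.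
  have hfφ : ∀ᶠ z in 𝓝 a, f z = f a + g a * φ z ^ n := by
    filter_upwards [hfg] with z hz
    rw [mul_pow, cpow_nat_inv_pow _ (by omega)]
    field_simp
    simpa [sub_eq_iff_eq_add'] using hz
  obtain ⟨z₁, hz₁, z₂, hz₂, hne, heq⟩ :=
    exists_ne_pow_eq_pow_of_hasStrictDerivAt hφ one_ne_zero (by simp [φ]) hn2
      (inter_mem hU hfφ)
  exact hne (hinj hz₁.1 hz₂.1 (by rw [hz₁.2, hz₂.2, heq]))

theorem hasDerivAt_invFunOn_of_injOn {F : ℂ → ℂ} {Ω : Set ℂ}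
    (hF : DifferentiableOn ℂ F Ω) (hΩ : IsOpen Ω) (hinj : InjOn F Ω) {z : ℂ} (hz : z ∈ Ω) :
    HasDerivAt (invFunOn F Ω) (deriv F z)⁻¹ (F z) :=
  have hFz := hF.analyticOnNhd hΩ z hz
  HasStrictDerivAt.hasDerivAt <| hFz.hasStrictDerivAt.to_local_left_inverse
    (hFz.deriv_ne_zero_of_injOn (hΩ.mem_nhds hz) hinj)
    (eventually_of_mem (hΩ.mem_nhds hz) fun _ hx ↦ hinj.leftInvOn_invFunOn hx)

theorem differentiableOn_invFunOn_of_bijOn {F : ℂ → ℂ} {Ω T : Set ℂ}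
    (hF : DifferentiableOn ℂ F Ω) (hΩ : IsOpen Ω) (hbij : BijOn F Ω T) :
    DifferentiableOn ℂ (invFunOn F Ω) T := by
  rw [← hbij.image_eq]
  rintro _ ⟨z, hz, rfl⟩
  exact (hasDerivAt_invFunOn_of_injOn hF hΩ hbij.injOn hz).differentiableAt
    |>.differentiableWithinAt

theorem eqOn_id_of_bijOn_ball_s2 {f : ℂ → ℂ} (hf : DifferentiableOn ℂ f (ball 0 1))
    (hbij : BijOn f (ball 0 1) (ball 0 1)) (h0 : f 0 = 0) (hf' : 0 < deriv f 0) :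
    EqOn f id (ball 0 1) := by
  have h0mem : (0 : ℂ) ∈ ball (0 : ℂ) 1 := mem_ball_self one_pos
  set g := invFunOn f (ball 0 1)
  have hfmaps : MapsTo f (ball 0 1) (closedBall (f 0) 1) := by
    rw [h0]; exact hbij.mapsTo.mono_right ball_subset_closedBall
  have hgmaps : MapsTo g (ball 0 1) (closedBall (g 0) 1) := by
    have hg0 : g 0 = 0 := by
      conv_lhs => rw [← h0]
      exact hbij.injOn.leftInvOn_invFunOn h0mem
    rw [hg0]; exact hbij.surjOn.mapsTo_invFunOn.mono_right ball_subset_closedBall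
  have hg' : deriv g 0 = (deriv f 0)⁻¹ := by
    simpa [h0] using (hasDerivAt_invFunOn_of_injOn hf isOpen_ball hbij.injOn h0mem).deriv
  have hfle : ‖deriv f 0‖ ≤ 1 := norm_deriv_le_one_of_mapsTo_ball hf hfmaps one_pos
  have hgle : ‖deriv g 0‖ ≤ 1 :=
    norm_deriv_le_one_of_mapsTo_ball (differentiableOn_invFunOn_of_bijOn hf isOpen_ball hbij)
      hgmaps one_pos
  have hnorm : ‖deriv f 0‖ = 1 := by
    rw [hg', norm_inv] at hgle
    exact le_antisymm hfle ((inv_le_one₀ (norm_pos_iff.2 hf'.ne')).1 hgle)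
  have hf1 : deriv f 0 = 1 := by
    rw [← norm_of_nonneg' hf'.le, hnorm, ofReal_one]
  intro z hz
  simpa [h0, hf1] using affine_of_mapsTo_ball_of_norm_dslope_eq_div hf hfmaps h0mem
    (by simp [hf1]) hz

theorem eqOn_id_of_bijOn_of_bijOn_ball {U : Set ℂ} (hU : IsOpen U) {φ K : ℂ → ℂ} {p : ℂ}
    (hφ : DifferentiableOn ℂ φ U) (hφbij : BijOn φ U (ball 0 1)) (hp : p ∈ U) (hφp : φ p = 0)
    (hK : DifferentiableOn ℂ K U) (hKbij : BijOn K U U) (hKp : K p = p) (hK' : 0 < deriv K p) :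
    EqOn K id U := by
  set ψ := invFunOn φ U
  have hψφ : InvOn ψ φ U (ball 0 1) := hφbij.invOn_invFunOn
  have hψbij : BijOn ψ (ball 0 1) U := hψφ.symm.bijOn hφbij.surjOn.mapsTo_invFunOn hφbij.mapsTo
  have hψ0 : ψ 0 = p := by rw [← hφp]; exact hψφ.1 hp
  have hφ' : HasDerivAt φ (deriv φ p) p := (hφ.differentiableAt (hU.mem_nhds hp)).hasDerivAt
  have hψ' : HasDerivAt ψ (deriv φ p)⁻¹ 0 := by
    simpa [hφp] using hasDerivAt_invFunOn_of_injOn hφ hU hφbij.injOn hp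
  have hK'p : HasDerivAt K (deriv K p) p := (hK.differentiableAt (hU.mem_nhds hp)).hasDerivAt
  have hφp' : deriv φ p ≠ 0 :=
    (hφ.analyticOnNhd hU p hp).deriv_ne_zero_of_injOn (hU.mem_nhds hp) hφbij.injOn
  set f := φ ∘ K ∘ ψ
  have hf : DifferentiableOn ℂ f (ball 0 1) :=
    hφ.comp (hK.comp (differentiableOn_invFunOn_of_bijOn hφ hU hφbij) hψbij.mapsTo)
      (hKbij.mapsTo.comp hψbij.mapsTo)
  have hf0 : f 0 = 0 := by simp [f, hψ0, hKp, hφp]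
  have hf' : deriv f 0 = deriv K p := by
    have hKψ : HasDerivAt K (deriv K p) (ψ 0) := by rwa [hψ0]
    have hφK : HasDerivAt φ (deriv φ p) (K (ψ 0)) := by rwa [hψ0, hKp]
    rw [(hφK.comp 0 (hKψ.comp 0 hψ')).deriv]
    field_simp
  have hfid := eqOn_id_of_bijOn_ball_s2 hf (hφbij.comp (hKbij.comp hψbij)) hf0 (hf' ▸ hK')
  intro w hw
  refine hφbij.injOn (hKbij.mapsTo hw) hw ?_
  simpa [f, hψφ.1 hw] using hfid (hφbij.mapsTo hw)

theorem add_one_ne_zero_of_re_pos {u : ℂ} (hu : 0 < u.re) : u + 1 ≠ 0 := fun h ↦ by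
  have := congrArg re h
  simp only [add_re, one_re, zero_re] at this
  linarith

theorem bijOn_cayley : BijOn (fun u : ℂ ↦ (u - 1) / (u + 1)) {u | 0 < u.re} (ball 0 1) := by
  have hv1 : ∀ {v : ℂ}, v ∈ ball (0 : ℂ) 1 → 1 - v ≠ 0 := fun hv h ↦ by
    simp [← sub_eq_zero.mp h] at hv
  refine InvOn.bijOn (f' := fun v ↦ (1 + v) / (1 - v)) ⟨fun u hu ↦ ?_, fun v hv ↦ ?_⟩
    (fun u hu ↦ ?_) (fun v hv ↦ ?_)
  · have := add_one_ne_zero_of_re_pos hu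
    field_simp
    ring
  · have := hv1 hv
    field_simp
    ring
  · rw [mem_ofPred_eq] at hu
    rw [mem_ball_zero_iff, norm_div, div_lt_one (norm_pos_iff.2 (add_one_ne_zero_of_re_pos hu)),
      ← sq_lt_sq₀ (norm_nonneg _) (norm_nonneg _), Complex.sq_norm, Complex.sq_norm,
      normSq_apply, normSq_apply]
    simp only [sub_re, one_re, sub_im, one_im, sub_zero, add_re, add_im, add_zero]
    nlinarith
  · have hpos := normSq_pos.2 (hv1 hv)
    rw [mem_ball_zero_iff, ← sq_lt_one_iff₀ (norm_nonneg _), Complex.sq_norm, normSq_apply] at hv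
    rw [mem_ofPred_eq, div_re, ← add_div]
    apply div_pos _ hpos
    simp only [add_re, one_re, sub_re, add_im, one_im, zero_add, sub_im, zero_sub, mul_neg]
    nlinarith

theorem bijOn_exp_halfPi_mul :
    BijOn (fun w : ℂ ↦ exp (π / 2 * w)) {w | |w.im| < 1} {u | 0 < u.re} := by
  have him : ∀ w : ℂ, (π / 2 * w).im = π / 2 * w.im := fun w ↦ by simp
  have hπ := Real.pi_pos
  refine InvOn.bijOn (f' := fun u ↦ 2 / π * log u) ⟨fun w hw ↦ ?_, fun u hu ↦ ?_⟩
    (fun w hw ↦ ?_) (fun u hu ↦ ?_)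
  · obtain ⟨hw₁, hw₂⟩ := abs_lt.1 (mem_ofPred_eq ▸ hw)
    show 2 / π * log (exp (π / 2 * w)) = w
    rw [log_exp] <;> [field_simp; (rw [him]; nlinarith); (rw [him]; nlinarith)]
  · have hu0 : u ≠ 0 := fun h ↦ by simp [h] at hu
    show exp (π / 2 * (2 / π * log u)) = u
    rw [show (π : ℂ) / 2 * (2 / π * log u) = log u by field_simp, exp_log hu0]
  · obtain ⟨hw₁, hw₂⟩ := abs_lt.1 (mem_ofPred_eq ▸ hw)
    rw [mem_ofPred_eq, exp_re, him]
    exact mul_pos (Real.exp_pos _) (Real.cos_pos_of_mem_Ioo ⟨by nlinarith, by nlinarith⟩)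
  · have harg := abs_arg_lt_pi_div_two_iff.2 (Or.inl hu)
    rw [mem_ofPred_eq,
      show (fun u ↦ 2 / π * log u : ℂ → ℂ) u = ((2 / π : ℝ) : ℂ) * log u by push_cast; ring,
      im_ofReal_mul, log_im, abs_mul, abs_of_pos (by positivity)]
    calc 2 / π * |u.arg| < 2 / π * (π / 2) := by gcongr
      _ = 1 := by field_simp

noncomputable def stripToDisk (w : ℂ) : ℂ := (exp (π / 2 * w) - 1) / (exp (π / 2 * w) + 1)

theorem bijOn_stripToDisk : BijOn stripToDisk {w | |w.im| < 1} (ball 0 1) :=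
  bijOn_cayley.comp bijOn_exp_halfPi_mul

theorem differentiableOn_stripToDisk : DifferentiableOn ℂ stripToDisk {w | |w.im| < 1} := by
  intro w hw
  have hne : exp (π / 2 * w) + 1 ≠ 0 := add_one_ne_zero_of_re_pos (bijOn_exp_halfPi_mul.mapsTo hw)
  unfold stripToDisk
  fun_prop (disch := exact hne)

theorem isOpen_strip_s2 : IsOpen {w : ℂ | |w.im| < 1} :=
  isOpen_lt (continuous_abs.comp continuous_im) continuous_const

theorem eqOn_id_of_bijOn_strip {K : ℂ → ℂ} (hK : DifferentiableOn ℂ K {w | |w.im| < 1})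
    (hKbij : BijOn K {w | |w.im| < 1} {w | |w.im| < 1}) (hK0 : K 0 = 0) (hK' : 0 < deriv K 0) :
    EqOn K id {w | |w.im| < 1} :=
  eqOn_id_of_bijOn_of_bijOn_ball isOpen_strip_s2 differentiableOn_stripToDisk bijOn_stripToDisk
    (by simp) (by simp [stripToDisk]) hK hKbij hK0 hK'

theorem stmt_2_general (Ω : Set ℂ) (hΩ_open : IsOpen Ω)
    (L : ℝ) (hper : ∀ z : ℂ, z ∈ Ω ↔ z + (L : ℂ) ∈ Ω)
    (z₀ : ℂ) (hz₀ : z₀ ∈ Ω) (F : ℂ → ℂ)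
    (hF : DifferentiableOn ℂ F Ω)
    (hbij : Set.BijOn F Ω {z : ℂ | |z.im| < 1})
    (h0 : F z₀ = 0)
    (hM : ∃ M : ℝ, 0 < M ∧ F (z₀ + L) = (M : ℂ))
    (hd : ∃ r : ℝ, 0 < r ∧ deriv F (z₀ + L) / deriv F z₀ = (r : ℂ)) :
    ∀ z ∈ Ω, F (z + L) = F z + F (z₀ + L) := by
  obtain ⟨M, -, hFM⟩ := hM
  obtain ⟨r, hr, hFr⟩ := hd
  set G := invFunOn F Ω
  have hGF : InvOn G F Ω {z : ℂ | |z.im| < 1} := hbij.invOn_invFunOn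
  have hG0 : G 0 = z₀ := h0 ▸ hGF.1 hz₀
  have hshift : BijOn (· + (L : ℂ)) Ω Ω :=
    ⟨fun z hz ↦ (hper z).1 hz, (add_left_injective _).injOn,
      fun z hz ↦ ⟨z - L, (hper _).2 (by simpa using hz), by simp⟩⟩
  have hsub : BijOn (· - (M : ℂ)) {z : ℂ | |z.im| < 1} {z : ℂ | |z.im| < 1} :=
    ⟨fun z hz ↦ by simpa using hz, (sub_left_injective).injOn,
      fun z hz ↦ ⟨z + M, by simpa using hz, by simp⟩⟩
  set K : ℂ → ℂ := fun w ↦ F (G w + L) - M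
  have hKbij : BijOn K {z : ℂ | |z.im| < 1} {z : ℂ | |z.im| < 1} :=
    hsub.comp (hbij.comp (hshift.comp (hGF.symm.bijOn hbij.surjOn.mapsTo_invFunOn hbij.mapsTo)))
  have hK : DifferentiableOn ℂ K {z : ℂ | |z.im| < 1} :=
    ((hF.comp ((differentiableOn_invFunOn_of_bijOn hF hΩ_open hbij).add_const _)
      (hshift.mapsTo.comp hbij.surjOn.mapsTo_invFunOn)).sub_const _)
  have hK0 : K 0 = 0 := by simp [K, hG0, hFM]
  have hK' : deriv K 0 = r := by
    have hG' : HasDerivAt G (deriv F z₀)⁻¹ 0 := by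
      simpa [h0] using hasDerivAt_invFunOn_of_injOn hF hΩ_open hbij.injOn hz₀
    have hFL : HasDerivAt F (deriv F (z₀ + L)) (G 0 + L) := by
      rw [hG0]
      exact (hF.differentiableAt (hΩ_open.mem_nhds ((hper z₀).1 hz₀))).hasDerivAt
    have hK'0 : HasDerivAt K (deriv F (z₀ + L) * (deriv F z₀)⁻¹) 0 :=
      (hFL.comp 0 (hG'.add_const _)).sub_const _
    rw [hK'0.deriv, ← hFr, div_eq_mul_inv]
  have hKid := eqOn_id_of_bijOn_strip hK hKbij hK0 (hK' ▸ zero_lt_real.2 hr)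
  intro z hz
  have := hKid (hbij.mapsTo hz)
  simp only [K, hGF.1 hz, id] at this
  rw [hFM]
  linear_combination this

/-- a normalized Riemann map `F` of an `L`-periodic, nonempty, open,
simply connected set `Ω ≠ ℂ` onto the strip `S = {z : |Im z| < 1}`, with
`F z₀ = 0`, `M := F (z₀ + L)` a positive real, and `F'(z₀+L)/F'(z₀)` a positive
real, is itself periodic: `F (z + L) = F z + M` on `Ω`. -/
theorem stmt_2 (Ω : Set ℂ) (hΩ_open : IsOpen Ω) (hΩ_ne : Ω.Nonempty)
    (hΩ_sc : SimplyConnectedSpace Ω) (hΩ_ne_univ : Ω ≠ Set.univ)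
    (L : ℝ) (hL : 0 < L) (hper : ∀ z : ℂ, z ∈ Ω ↔ z + (L : ℂ) ∈ Ω)
    (z₀ : ℂ) (hz₀ : z₀ ∈ Ω) (F : ℂ → ℂ)
    (hF : DifferentiableOn ℂ F Ω)
    (hbij : Set.BijOn F Ω {z : ℂ | |z.im| < 1})
    (h0 : F z₀ = 0)
    (hM : ∃ M : ℝ, 0 < M ∧ F (z₀ + L) = (M : ℂ))
    (hd : ∃ r : ℝ, 0 < r ∧ deriv F (z₀ + L) / deriv F z₀ = (r : ℂ)) :
    ∀ z ∈ Ω, F (z + L) = F z + F (z₀ + L) :=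
  stmt_2_general Ω hΩ_open L hper z₀ hz₀ F hF hbij h0 hM hd
end

section
/- Let n ∈ ℕ and let v, b : ℝⁿ × ℝ → ℝⁿ be twice continuously differentiable, and assume that ∂ₜ b + (v·∇)b − (b·∇)v = 0 holds pointwise on ℝⁿ × ℝ. Then ∂ₜ(div b) + v·∇(div b) − b·∇(div v) = 0 holds pointwise on ℝⁿ × ℝ, where div denotes the spatial divergence and ∇ spatial differentiation. -/
/-!
Differentiate the `i`-th component of the transport equation along the `i`-th coordinate
direction and sum over `i`. Since `v` and `b` are `C²`, second derivatives commute, and what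
remains is the claimed equation for `div b` plus the two terms `∑ᵢⱼ ∂ᵢvⱼ ∂ⱼbᵢ` and
`∑ᵢⱼ ∂ᵢbⱼ ∂ⱼvᵢ`, which coincide after exchanging `i` and `j`.
-/

/-- The spatial partial derivative of `f : ℝⁿ × ℝ → ℝ` in the `i`-th coordinate
direction. -/
noncomputable def sd {n : ℕ} (f : ((Fin n → ℝ) × ℝ) → ℝ) (i : Fin n)
    (q : (Fin n → ℝ) × ℝ) : ℝ :=
  fderiv ℝ f q (Pi.single i 1, 0)

/-- The time derivative of `f : ℝⁿ × ℝ → ℝ`. -/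
noncomputable def td {n : ℕ} (f : ((Fin n → ℝ) × ℝ) → ℝ) (q : (Fin n → ℝ) × ℝ) : ℝ :=
  fderiv ℝ f q (0, 1)

open Finset

section DirectionalDerivatives

variable {E F ι : Type*} [NormedAddCommGroup E] [NormedSpace ℝ E]
  [NormedAddCommGroup F] [NormedSpace ℝ F] [Fintype ι]

theorem ContDiff.differentiable_fderiv_apply {f : E → F} (hf : ContDiff ℝ 2 f) (u : E) :
    Differentiable ℝ fun x => fderiv ℝ f x u :=
  ((hf.fderiv_right (m := 1) le_rfl).differentiable one_ne_zero).clm_apply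
    (differentiable_const u)

theorem ContDiff.fderiv_fderiv_apply_comm {f : E → F} (hf : ContDiff ℝ 2 f) (x u w : E) :
    fderiv ℝ (fun y => fderiv ℝ f y u) x w = fderiv ℝ (fun y => fderiv ℝ f y w) x u := by
  have hd : DifferentiableAt ℝ (fderiv ℝ f) x :=
    (hf.fderiv_right (m := 1) le_rfl).differentiable one_ne_zero x
  simp only [fderiv_clm_apply hd (differentiableAt_const _), fderiv_const_apply,
    ContinuousLinearMap.comp_zero, ContinuousLinearMap.flip_apply, zero_add]
  exact hf.contDiffAt.isSymmSndFDerivAt (by simp) w u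

theorem fderiv_sum_fderiv_apply {f : ι → E → F} (hf : ∀ i, ContDiff ℝ 2 (f i)) (e : ι → E)
    (x u : E) :
    fderiv ℝ (fun y => ∑ i, fderiv ℝ (f i) y (e i)) x u
      = ∑ i, fderiv ℝ (fun y => fderiv ℝ (f i) y (e i)) x u := by
  rw [fderiv_fun_sum fun i _ => (hf i).differentiable_fderiv_apply (e i) x, _root_.sum_apply]

theorem fderiv_sum_mul_fderiv_apply {g : ι → E → ℝ} {h : E → ℝ}
    (hg : ∀ j, Differentiable ℝ (g j)) (hh : ContDiff ℝ 2 h) (e : ι → E) (x u : E) :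
    fderiv ℝ (fun y => ∑ j, g j y * fderiv ℝ h y (e j)) x u
      = ∑ j, (fderiv ℝ (g j) x u * fderiv ℝ h x (e j)
          + g j x * fderiv ℝ (fun y => fderiv ℝ h y u) x (e j)) := by
  have hh' : ∀ j, Differentiable ℝ fun y => fderiv ℝ h y (e j) := fun j =>
    hh.differentiable_fderiv_apply (e j)
  rw [fderiv_fun_sum fun j _ => (hg j x).fun_mul (hh' j x), _root_.sum_apply]
  refine sum_congr rfl fun j _ => ?_
  rw [fderiv_fun_mul (hg j x) (hh' j x), hh.fderiv_fderiv_apply_comm]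
  simp only [add_apply, smul_apply, smul_eq_mul]
  ring

end DirectionalDerivatives

section Transport

variable {E ι : Type*} [NormedAddCommGroup E] [NormedSpace ℝ E] [Fintype ι]
  {v b : E → ι → ℝ} (e : ι → E) (τ : E)

theorem sum_fderiv_transport_apply (hv : ∀ i, ContDiff ℝ 2 (v · i))
    (hb : ∀ i, ContDiff ℝ 2 (b · i)) (x : E) :
    ∑ i, fderiv ℝ (fun y => fderiv ℝ (b · i) y τ + ∑ j, v y j * fderiv ℝ (b · i) y (e j)
        - ∑ j, b y j * fderiv ℝ (v · i) y (e j)) x (e i)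
      = fderiv ℝ (fun y => ∑ i, fderiv ℝ (b · i) y (e i)) x τ
        + ∑ j, v x j * fderiv ℝ (fun y => ∑ i, fderiv ℝ (b · i) y (e i)) x (e j)
        - ∑ j, b x j * fderiv ℝ (fun y => ∑ i, fderiv ℝ (v · i) y (e i)) x (e j) := by
  have hv' : ∀ j, Differentiable ℝ (v · j) := fun j => (hv j).differentiable two_ne_zero
  have hb' : ∀ j, Differentiable ℝ (b · j) := fun j => (hb j).differentiable two_ne_zero
  have hdiff_sum : ∀ (g : ι → E → ℝ) (h : E → ℝ), (∀ j, Differentiable ℝ (g j)) →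
      ContDiff ℝ 2 h → Differentiable ℝ fun y => ∑ j, g j y * fderiv ℝ h y (e j) := fun g h hg hh =>
    Differentiable.fun_sum fun j _ => (hg j).fun_mul (hh.differentiable_fderiv_apply (e j))
  have hcross : ∑ i, ∑ j, fderiv ℝ (v · j) x (e i) * fderiv ℝ (b · i) x (e j)
      = ∑ i, ∑ j, fderiv ℝ (b · j) x (e i) * fderiv ℝ (v · i) x (e j) := by
    rw [sum_comm]
    exact sum_congr rfl fun i _ => sum_congr rfl fun j _ => mul_comm _ _
  have hexpand : ∀ i, fderiv ℝ (fun y => fderiv ℝ (b · i) y τ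
        + ∑ j, v y j * fderiv ℝ (b · i) y (e j) - ∑ j, b y j * fderiv ℝ (v · i) y (e j)) x (e i)
      = fderiv ℝ (fun y => fderiv ℝ (b · i) y (e i)) x τ
        + ∑ j, (fderiv ℝ (v · j) x (e i) * fderiv ℝ (b · i) x (e j)
          + v x j * fderiv ℝ (fun y => fderiv ℝ (b · i) y (e i)) x (e j))
        - ∑ j, (fderiv ℝ (b · j) x (e i) * fderiv ℝ (v · i) x (e j)
          + b x j * fderiv ℝ (fun y => fderiv ℝ (v · i) y (e i)) x (e j)) := fun i => by
    have hτ := (hb i).differentiable_fderiv_apply τ x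
    rw [fderiv_fun_sub (hτ.fun_add (hdiff_sum _ _ hv' (hb i) x)) (hdiff_sum _ _ hb' (hv i) x),
      fderiv_fun_add hτ (hdiff_sum _ _ hv' (hb i) x),
      sub_apply, add_apply, (hb i).fderiv_fderiv_apply_comm,
      fderiv_sum_mul_fderiv_apply hv' (hb i), fderiv_sum_mul_fderiv_apply hb' (hv i)]
  simp only [hexpand, fderiv_sum_fderiv_apply hb, fderiv_sum_fderiv_apply hv, mul_sum,
    sum_add_distrib, sum_sub_distrib]
  rw [sum_comm (s := univ) (t := univ) (f := fun j i => v x j * _),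
    sum_comm (s := univ) (t := univ) (f := fun j i => b x j * _), hcross]
  ring

theorem transport_divergence_eq_zero
    (hv : ∀ i, ContDiff ℝ 2 (v · i)) (hb : ∀ i, ContDiff ℝ 2 (b · i))
    (htransport : ∀ y i, fderiv ℝ (b · i) y τ + ∑ j, v y j * fderiv ℝ (b · i) y (e j)
        - ∑ j, b y j * fderiv ℝ (v · i) y (e j) = 0) (x : E) :
    fderiv ℝ (fun y => ∑ i, fderiv ℝ (b · i) y (e i)) x τ
        + ∑ j, v x j * fderiv ℝ (fun y => ∑ i, fderiv ℝ (b · i) y (e i)) x (e j)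
        - ∑ j, b x j * fderiv ℝ (fun y => ∑ i, fderiv ℝ (v · i) y (e i)) x (e j) = 0 := by
  rw [← sum_fderiv_transport_apply e τ hv hb x]
  have hzero : ∀ i, (fun y => fderiv ℝ (b · i) y τ + ∑ j, v y j * fderiv ℝ (b · i) y (e j)
      - ∑ j, b y j * fderiv ℝ (v · i) y (e j)) = 0 := fun i => funext fun y => htransport y i
  simp [hzero]

end Transport

/-- if `∂ₜ b + (v·∇)b − (b·∇)v = 0` pointwise on `ℝⁿ × ℝ` for `C²`
time-dependent vector fields `v, b`, then
`∂ₜ(div b) + v·∇(div b) − b·∇(div v) = 0` pointwise on `ℝⁿ × ℝ`. -/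
theorem stmt_8 (n : ℕ) (v b : ((Fin n → ℝ) × ℝ) → (Fin n → ℝ))
    (hv : ContDiff ℝ 2 v) (hb : ContDiff ℝ 2 b)
    (heq : ∀ q : (Fin n → ℝ) × ℝ, ∀ i,
      td (fun q' => b q' i) q
        + (∑ j, v q j * sd (fun q' => b q' i) j q)
        - (∑ j, b q j * sd (fun q' => v q' i) j q) = 0)
    (q : (Fin n → ℝ) × ℝ) :
    td (fun q' => ∑ i, sd (fun q'' => b q'' i) i q') q
      + (∑ j, v q j * sd (fun q' => ∑ i, sd (fun q'' => b q'' i) i q') j q)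
      - (∑ j, b q j * sd (fun q' => ∑ i, sd (fun q'' => v q'' i) i q') j q) = 0 :=
  transport_divergence_eq_zero (fun i => (Pi.single i 1, 0)) (0, 1) (contDiff_pi.mp hv)
    (contDiff_pi.mp hb) heq q
end
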